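/- arXiv:0808.3915 — 5 statements merged into one kernel-verified Lean document; each statement's English description precedes it below -/
import Mathlib

section
/- Let v ∈ V_l and let λ be a FLOTW l-partition of multicharge v. Let γ₁ = (a₁,b₁,c₁) and γ₂ = (a₂,b₂,c₂) be i-nodes (for the same i ∈ ℤ/eℤ), each of which is either an addable or a removable i-node of λ. If λ^{(c₁)}_{a₁} < λ^{(c₂)}_{a₂}, then γ₁ ≺_v γ₂. -/
/-- An `l`-multipartition: `part c a` is the `(a+1)`-st part (0-based row index `a`)
of the partition `λ^{(c)}`. Parts are weakly decreasing and eventually zero. -/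
structure MultiPartition (l : ℕ) where
  part : Fin l → ℕ → ℕ
  antitone : ∀ c : Fin l, ∀ a b : ℕ, a ≤ b → part c b ≤ part c a
  finite : ∃ N : ℕ, ∀ c : Fin l, ∀ a : ℕ, N ≤ a → part c a = 0

namespace MultiPartition

variable {l : ℕ}

/-- A node is a triple `(a, b, c)`: row `a`, column `b` (both 0-based), component `c`.
The node `(a, b, c)` belongs to `lam` iff `b < lam.part c a`. -/
def content (v : Fin l → ℤ) (γ : ℕ × ℕ × Fin l) : ℤ :=
  (γ.2.1 : ℤ) - (γ.1 : ℤ) + v γ.2.2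

def res (e : ℕ) (v : Fin l → ℤ) (γ : ℕ × ℕ × Fin l) : ZMod e :=
  ((content v γ : ℤ) : ZMod e)

/-- The total order `≺_v` on `i`-nodes. -/
def prec (v : Fin l → ℤ) (γ δ : ℕ × ℕ × Fin l) : Prop :=
  content v γ < content v δ ∨ (content v γ = content v δ ∧ δ.2.2 < γ.2.2)

/-- `γ = (a,b,c)` is a removable node of `lam`: it is the last node of its row
(`lam.part c a = b + 1`) and removing it leaves a multipartition. -/
def Removable (lam : MultiPartition l) (γ : ℕ × ℕ × Fin l) : Prop :=
  lam.part γ.2.2 γ.1 = γ.2.1 + 1 ∧ lam.part γ.2.2 (γ.1 + 1) ≤ γ.2.1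

/-- `γ = (a,b,c)` is an addable node of `lam`: it sits just beyond its row
(`lam.part c a = b`) and adding it yields a multipartition. -/
def Addable (lam : MultiPartition l) (γ : ℕ × ℕ × Fin l) : Prop :=
  lam.part γ.2.2 γ.1 = γ.2.1 ∧ (γ.1 = 0 ∨ γ.2.1 < lam.part γ.2.2 (γ.1 - 1))

/-- The set `V_l` of multicharges: `v_0 ≤ v_1 ≤ ⋯ ≤ v_{l-1} < v_0 + e`. -/
def memV (e : ℕ) [NeZero l] (v : Fin l → ℤ) : Prop :=
  Monotone v ∧ ∀ c : Fin l, v c < v 0 + e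

/-- FLOTW condition for an `l`-partition with multicharge `v ∈ V_l`. -/
def IsFLOTW (e : ℕ) [NeZero l] (v : Fin l → ℤ) (lam : MultiPartition l) : Prop :=
  (∀ c : Fin l, ∀ h : (c : ℕ) + 1 < l, ∀ a : ℕ,
      lam.part ⟨(c : ℕ) + 1, h⟩ (a + (v ⟨(c : ℕ) + 1, h⟩ - v c).toNat) ≤ lam.part c a)
  ∧ (∀ a : ℕ,
      lam.part 0 (a + ((e : ℤ) + v 0 -
          v ⟨l - 1, Nat.sub_lt (Nat.pos_of_ne_zero (NeZero.ne l)) Nat.one_pos⟩).toNat)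
        ≤ lam.part ⟨l - 1, Nat.sub_lt (Nat.pos_of_ne_zero (NeZero.ne l)) Nat.one_pos⟩ a)
  ∧ ∀ k : ℕ, 1 ≤ k → ∃ i : ZMod e, ∀ c : Fin l, ∀ a : ℕ,
      lam.part c a = k → (((k : ℤ) - ((a : ℤ) + 1) + v c : ℤ) : ZMod e) ≠ i

end MultiPartition

/-!
Condition (i) of FLOTW, chained through the components and once around the cycle
`l - 1 → 0`, says that a row of `λ^{(c)}` is at least as long as any row of `λ^{(d)}` lying
`v_d - v_c + m e` or more rows further down, provided `c ≤ d` or `m ≥ 1`. If `γ₁ ⊀ γ₂`,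
equality of residues gives `c(γ₁) = c(γ₂) + m e` with `m ≥ 0` (and `c₁ ≤ c₂` when `m = 0`).
As `γ₁` and `γ₂` are addable or removable, their columns differ from their row lengths by at
most one, so `λ^{(c₁)}_{a₁} < λ^{(c₂)}_{a₂}` forces `b₁ ≤ b₂`, hence
`a₂ ≥ a₁ + v_{c₂} - v_{c₁} + m e`, and then `λ^{(c₂)}_{a₂} ≤ λ^{(c₁)}_{a₁}`.
-/

theorem exists_nat_mul_eq_of_dvd_of_nonneg {e : ℕ} {x : ℤ} (h : (e : ℤ) ∣ x) (hx : 0 ≤ x) :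
    ∃ m : ℕ, x = m * e := by
  obtain ⟨k, rfl⟩ := h
  rcases Nat.eq_zero_or_pos e with rfl | he
  · exact ⟨0, by simp⟩
  · lift k to ℕ using nonneg_of_mul_nonneg_right hx (by exact_mod_cast he)
    exact ⟨k, by ring⟩

namespace MultiPartition

variable {l : ℕ}

def RowsDominate (lam : MultiPartition l) (c d : Fin l) (s : ℤ) : Prop :=
  ∀ a a' : ℕ, (a : ℤ) + s ≤ a' → lam.part d a' ≤ lam.part c a

namespace RowsDominate

variable {lam : MultiPartition l} {c d f : Fin l} {s t : ℤ}

theorem refl (lam : MultiPartition l) (c : Fin l) : lam.RowsDominate c c 0 :=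
  fun a a' h => lam.antitone c a a' (by omega)

theorem mono (h : lam.RowsDominate c d s) (hst : s ≤ t) : lam.RowsDominate c d t :=
  fun a a' h' => h a a' (by omega)

/-- `hs` is needed because the intermediate row `a + s` has to be a natural number. -/
theorem trans (h : lam.RowsDominate c d s) (h' : lam.RowsDominate d f t) (hs : 0 ≤ s) :
    lam.RowsDominate c f (s + t) :=
  fun a a' ha => (h' (a + s).toNat a' (by omega)).trans (h a (a + s).toNat (by omega))

theorem nsmul (h : lam.RowsDominate c c s) (hs : 0 ≤ s) (m : ℕ) :
    lam.RowsDominate c c (m * s) := by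
  induction m with
  | zero => simpa using refl lam c
  | succ m ih => exact (ih.trans h (by positivity)).mono (by push_cast; linarith)

end RowsDominate

section FLOTW

variable {e : ℕ} [NeZero l] {v : Fin l → ℤ} {lam : MultiPartition l}

theorem IsFLOTW.rowsDominate_succ (hv : memV e v) (hlam : IsFLOTW e v lam) (c : Fin l)
    (h : (c : ℕ) + 1 < l) : lam.RowsDominate c ⟨c + 1, h⟩ (v ⟨c + 1, h⟩ - v c) := by
  intro a a' ha
  have hvc : v c ≤ v ⟨c + 1, h⟩ := hv.1 (Fin.le_def.2 (Nat.le_succ _))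
  exact (lam.antitone _ _ _ (by omega)).trans (hlam.1 c h a)

theorem IsFLOTW.rowsDominate_wrap (hv : memV e v) (hlam : IsFLOTW e v lam) (c : Fin l)
    (hc : (c : ℕ) + 1 = l) : lam.RowsDominate c 0 (e + v 0 - v c) := by
  obtain ⟨c, hcl⟩ := c
  obtain rfl : c = l - 1 := by change c + 1 = l at hc; omega
  intro a a' ha
  have hvc := hv.2 ⟨l - 1, by omega⟩
  exact (lam.antitone _ _ _ (by omega)).trans (hlam.2.1 a)

theorem IsFLOTW.rowsDominate_of_le (hv : memV e v) (hlam : IsFLOTW e v lam) {c d : Fin l}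
    (hcd : c ≤ d) : lam.RowsDominate c d (v d - v c) := by
  obtain ⟨k, hk⟩ : ∃ k, (d : ℕ) = c + k := ⟨d - c, by rw [Fin.le_def] at hcd; omega⟩
  induction k generalizing d with
  | zero => simpa [Fin.ext hk] using RowsDominate.refl lam c
  | succ k ih =>
    have hd' : (c : ℕ) + k + 1 < l := by omega
    obtain rfl : d = ⟨c + k + 1, hd'⟩ := Fin.ext hk
    have hprev := ih (d := ⟨c + k, by omega⟩) (Fin.le_def.2 (by simp)) rfl
    have hvc : v c ≤ v ⟨c + k, by omega⟩ := hv.1 (Fin.le_def.2 (by simp))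
    exact (hprev.trans (hlam.rowsDominate_succ hv _ hd') (by linarith)).mono (by simp)

theorem IsFLOTW.rowsDominate_add_e (hv : memV e v) (hlam : IsFLOTW e v lam) (c d : Fin l) :
    lam.RowsDominate c d (v d - v c + e) := by
  have hl := NeZero.pos l
  let L : Fin l := ⟨l - 1, by omega⟩
  have hcL := hlam.rowsDominate_of_le hv (show c ≤ L from Fin.le_def.2 (by simp [L]; omega))
  have hL0 := hlam.rowsDominate_wrap hv L (by simp [L]; omega)
  have h0d := hlam.rowsDominate_of_le hv (Fin.zero_le d)
  have hvcL : v c ≤ v L := hv.1 (Fin.le_def.2 (by simp [L]; omega))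
  have hvL := hv.2 L
  have hvc := hv.2 c
  exact ((hcL.trans hL0 (by linarith)).trans h0d (by linarith)).mono (by linarith)

theorem IsFLOTW.rowsDominate_add_mul (hv : memV e v) (hlam : IsFLOTW e v lam) {c d : Fin l}
    {m : ℕ} (h : c ≤ d ∨ 1 ≤ m) : lam.RowsDominate c d (v d - v c + m * e) := by
  have hself (m : ℕ) : lam.RowsDominate d d (m * e) :=
    ((hlam.rowsDominate_add_e hv d d).mono (by simp)).nsmul (by positivity) m
  rcases h with hcd | hm
  · exact (hlam.rowsDominate_of_le hv hcd).trans (hself m) (sub_nonneg.2 (hv.1 hcd))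
  · obtain ⟨k, rfl⟩ : ∃ k, m = k + 1 := ⟨m - 1, by omega⟩
    have hvc := hv.2 c
    have hvd : v 0 ≤ v d := hv.1 (Fin.zero_le d)
    exact ((hlam.rowsDominate_add_e hv c d).trans (hself k) (by linarith)).mono
      (by push_cast; linarith)

end FLOTW

theorem col_le_part_le_col_succ {lam : MultiPartition l} {γ : ℕ × ℕ × Fin l}
    (h : Removable lam γ ∨ Addable lam γ) :
    γ.2.1 ≤ lam.part γ.2.2 γ.1 ∧ lam.part γ.2.2 γ.1 ≤ γ.2.1 + 1 := by
  rcases h with ⟨h, -⟩ | ⟨h, -⟩ <;> omega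

theorem exists_content_eq_add_mul_of_res_eq {e : ℕ} {v : Fin l → ℤ} {γ δ : ℕ × ℕ × Fin l}
    (h : res e v γ = res e v δ) (hle : content v δ ≤ content v γ) :
    ∃ m : ℕ, content v γ = content v δ + m * e := by
  obtain ⟨m, hm⟩ := exists_nat_mul_eq_of_dvd_of_nonneg
    ((ZMod.intCast_eq_intCast_iff_dvd_sub _ _ _).1 h.symm) (sub_nonneg.2 hle)
  exact ⟨m, by linarith⟩

end MultiPartition

open MultiPartition in
theorem flotw_len_lt_prec_general (e l : ℕ) [NeZero l]
    (v : Fin l → ℤ) (hv : memV e v)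
    (lam : MultiPartition l) (hlam : IsFLOTW e v lam) (i : ZMod e)
    (γ₁ γ₂ : ℕ × ℕ × Fin l)
    (h₁ : Removable lam γ₁ ∨ Addable lam γ₁) (hres₁ : res e v γ₁ = i)
    (h₂ : Removable lam γ₂ ∨ Addable lam γ₂) (hres₂ : res e v γ₂ = i)
    (hlen : lam.part γ₁.2.2 γ₁.1 < lam.part γ₂.2.2 γ₂.1) :
    prec v γ₁ γ₂ := by
  by_contra hnot
  simp only [prec, not_or, not_and, not_lt] at hnot
  obtain ⟨m, hm⟩ := exists_content_eq_add_mul_of_res_eq (hres₁.trans hres₂.symm) hnot.1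
  have hcomp : γ₁.2.2 ≤ γ₂.2.2 ∨ 1 ≤ m := by
    rcases Nat.eq_zero_or_pos m with rfl | hm0
    · exact .inl (hnot.2 (by simpa using hm))
    · exact .inr hm0
  have hcol : γ₁.2.1 ≤ γ₂.2.1 := by
    have := (col_le_part_le_col_succ h₁).1
    have := (col_le_part_le_col_succ h₂).2
    omega
  have hrow : (γ₁.1 : ℤ) + (v γ₂.2.2 - v γ₁.2.2 + m * e) ≤ γ₂.1 := by
    simp only [content] at hm
    have : (γ₁.2.1 : ℤ) ≤ γ₂.2.1 := by exact_mod_cast hcol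
    linarith
  exact absurd (hlam.rowsDominate_add_mul hv hcomp _ _ hrow) (not_le.2 hlen)

open MultiPartition in
/-- for a FLOTW `l`-partition, among addable/removable `i`-nodes,
strictly shorter row length forces strictly smaller position in `≺_v`. -/
theorem flotw_len_lt_prec (e l : ℕ) [NeZero l] (he : 2 ≤ e)
    (v : Fin l → ℤ) (hv : memV e v)
    (lam : MultiPartition l) (hlam : IsFLOTW e v lam) (i : ZMod e)
    (γ₁ γ₂ : ℕ × ℕ × Fin l)
    (h₁ : Removable lam γ₁ ∨ Addable lam γ₁) (hres₁ : res e v γ₁ = i)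
    (h₂ : Removable lam γ₂ ∨ Addable lam γ₂) (hres₂ : res e v γ₂ = i)
    (hlen : lam.part γ₁.2.2 γ₁.1 < lam.part γ₂.2.2 γ₂.1) :
    prec v γ₁ γ₂ :=
  flotw_len_lt_prec_general e l v hv lam hlam i γ₁ γ₂ h₁ hres₁ h₂ hres₂ hlen
end

section
/- Let v ∈ V_l and let λ be a FLOTW l-partition of multicharge v. Let γ_A = (a′, b+1, c′) be an addable i-node of λ and γ_R = (a, b, c) a removable i-node of λ (same residue i, with the column of γ_A exceeding that of γ_R by one). Then γ_R ≺_v γ_A. -/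
namespace MultiPartition

variable {l : ℕ}

/-!
Condition (i) of the FLOTW definition, chained along `c ≤ c'` and once around the cycle of
components, shows that row `j + s` of `λ^{(c')}` is no longer than row `j` of `λ^{(c)}`
whenever `s = v_{c'} - v_c` with `c ≤ c'`, or `s ≥ e + v_{c'} - v_c`. If `γ_A ⪯ γ_R`, equal
residues make the content difference `D = c(γ_R) - c(γ_A)` a nonnegative multiple of `e`
(and `c ≤ c'` when `D = 0`), and the row just above `γ_A` is row `a + D + v_{c'} - v_c` of
`λ^{(c')}`. It therefore has length at most `λ^{(c)}_a = b + 1`, which leaves no room to add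
`γ_A` in column `b + 1`.
-/

/-- The shift `s` lives in `ℤ` because it is a difference of charges. -/
def PartsDominate (lam : MultiPartition l) (c c' : Fin l) (s : ℤ) : Prop :=
  0 ≤ s ∧ ∀ a r : ℕ, (a : ℤ) + s ≤ r → lam.part c' r ≤ lam.part c a

namespace PartsDominate

variable {lam : MultiPartition l} {c c' c'' : Fin l} {s t : ℤ}

theorem refl (lam : MultiPartition l) (c : Fin l) : lam.PartsDominate c c 0 :=
  ⟨le_rfl, fun a r har => lam.antitone c a r (by omega)⟩

theorem of_part_le (hs : 0 ≤ s) (h : ∀ a : ℕ, lam.part c' (a + s.toNat) ≤ lam.part c a) :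
    lam.PartsDominate c c' s :=
  ⟨hs, fun a r har => (lam.antitone c' _ r (by omega)).trans (h a)⟩

theorem mono (h : lam.PartsDominate c c' s) (hst : s ≤ t) : lam.PartsDominate c c' t :=
  ⟨h.1.trans hst, fun a r har => h.2 a r (by omega)⟩

theorem trans (h : lam.PartsDominate c c' s) (h' : lam.PartsDominate c' c'' t) :
    lam.PartsDominate c c'' (s + t) :=
  have hs := h.1
  ⟨add_nonneg hs h'.1, fun a r har =>
    (h'.2 (a + s).toNat r (by omega)).trans (h.2 a _ (by omega))⟩

end PartsDominate

section FLOTW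

variable {e : ℕ} [NeZero l] {v : Fin l → ℤ} {lam : MultiPartition l}

theorem memV.sub_lt (hv : memV e v) (c c' : Fin l) : v c - v c' < e := by
  linarith [hv.2 c, hv.1 (Fin.zero_le c')]

theorem IsFLOTW.partsDominate_succ (hv : Monotone v) (hlam : IsFLOTW e v lam) (c : Fin l)
    (h : (c : ℕ) + 1 < l) : lam.PartsDominate c ⟨c + 1, h⟩ (v ⟨c + 1, h⟩ - v c) :=
  .of_part_le (sub_nonneg.2 (hv (Fin.le_def.2 (Nat.le_succ _)))) (hlam.1 c h)

theorem IsFLOTW.partsDominate_of_le (hv : Monotone v) (hlam : IsFLOTW e v lam) {c c' : Fin l}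
    (hcc : c ≤ c') : lam.PartsDominate c c' (v c' - v c) := by
  obtain ⟨k, hk⟩ := c'
  have hck : (c : ℕ) ≤ k := Fin.le_def.1 hcc
  clear hcc
  induction k, hck using Nat.le_induction with
  | base => simpa using PartsDominate.refl lam c
  | succ k hck ih =>
    have hstep := (ih (by omega)).trans
      (hlam.partsDominate_succ hv ⟨k, by omega⟩ hk)
    rwa [sub_add_sub_cancel'] at hstep

/-- Going once around the cycle of components `c → l-1 → 0 → c'`. -/
theorem IsFLOTW.partsDominate (hv : memV e v) (hlam : IsFLOTW e v lam) (c c' : Fin l) :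
    lam.PartsDominate c c' (e + v c' - v c) := by
  set last : Fin l := ⟨l - 1, Nat.sub_lt (Nat.pos_of_ne_zero (NeZero.ne l)) Nat.one_pos⟩
  have hwrap : lam.PartsDominate last 0 (e + v 0 - v last) :=
    .of_part_le (by linarith [hv.sub_lt last 0]) hlam.2.1
  have hc : c ≤ last := Fin.le_def.2 (Nat.le_sub_one_of_lt c.isLt)
  have hchain := ((hlam.partsDominate_of_le hv.1 hc).trans hwrap).trans
    (hlam.partsDominate_of_le hv.1 (Fin.zero_le c'))
  convert hchain using 1
  ring

theorem IsFLOTW.partsDominate_of_dvd (hv : memV e v) (hlam : IsFLOTW e v lam)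
    {c c' : Fin l} {D : ℤ} (hdvd : (e : ℤ) ∣ D) (hD : 0 ≤ D) (hcc : D = 0 → c ≤ c') :
    lam.PartsDominate c c' (D + v c' - v c) := by
  rcases eq_or_ne D 0 with rfl | hD0
  · simpa using hlam.partsDominate_of_le hv.1 (hcc rfl)
  · have heD : (e : ℤ) ≤ D := Int.le_of_dvd (lt_of_le_of_ne hD (Ne.symm hD0)) hdvd
    exact (hlam.partsDominate hv c c').mono (by linarith)

end FLOTW

end MultiPartition

open MultiPartition in
theorem flotw_rem_prec_add_general (e l : ℕ) [NeZero l]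
    (v : Fin l → ℤ) (hv : memV e v)
    (lam : MultiPartition l) (hlam : IsFLOTW e v lam) (i : ZMod e)
    (γA γR : ℕ × ℕ × Fin l)
    (hA : Addable lam γA) (hresA : res e v γA = i)
    (hR : Removable lam γR) (hresR : res e v γR = i)
    (hcol : γA.2.1 = γR.2.1 + 1) :
    prec v γR γA := by
  obtain ⟨a, b, c⟩ := γR
  obtain ⟨a', _, c'⟩ := γA
  subst hcol
  simp only [Removable, Addable, res, content, prec] at hA hR hresA hresR ⊢
  by_contra hprec
  push Not at hprec
  have hdvd := (ZMod.intCast_eq_intCast_iff_dvd_sub _ _ _).1 (hresA.trans hresR.symm)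
  obtain ⟨hs, hdom⟩ := hlam.partsDominate_of_dvd hv hdvd (by omega) fun h => hprec.2 (by omega)
  have habove := hdom a (a' - 1) (by omega)
  omega

open MultiPartition in
/-- for a FLOTW `l`-partition, an addable `i`-node whose column exceeds
by one the column of a removable `i`-node is larger in `≺_v`. -/
theorem flotw_rem_prec_add (e l : ℕ) [NeZero l] (he : 2 ≤ e)
    (v : Fin l → ℤ) (hv : memV e v)
    (lam : MultiPartition l) (hlam : IsFLOTW e v lam) (i : ZMod e)
    (γA γR : ℕ × ℕ × Fin l)
    (hA : Addable lam γA) (hresA : res e v γA = i)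
    (hR : Removable lam γR) (hresR : res e v γR = i)
    (hcol : γA.2.1 = γR.2.1 + 1) :
    prec v γR γA :=
  flotw_rem_prec_add_general e l v hv lam hlam i γA γR hA hresA hR hresR hcol
end

section
/- Let v ∈ V_l, λ ∈ Φ(v) and i ∈ ℤ/eℤ. For an addable or removable i-node γ = (a,b,c) of λ define len(γ) = λ^{(c)}_a (so len(γ) = b for a removable node and len(γ) = b − 1 for an addable node). Then the enumeration of all addable and removable i-nodes of λ in increasing ≺_v-order is weakly increasing in len, and among nodes with equal len every removable i-node precedes every addable i-node. -/
/-!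
Row `a` of component `c` starts on the diagonal of content `v c - a`. The first inequality of
FLOTW condition (i) says that rows of component `c + 1` are no longer than the rows of component
`c` starting on the same diagonal or above; chaining these over `c ≤ c'`, and closing the chain
through the second inequality (from component `l - 1` back to component `0`, `e` diagonals
lower), a row of `c'` is no longer than a row of `c` whenever it starts on the same diagonal or
below (if `c ≤ c'`), or at least `e` diagonals below (for any `c, c'`).

If two `i`-nodes `γ = (a, b, c)`, `δ = (a', b', c')` are not in `≺_v`-order, equality of
residues forces one of these two situations for their contents. A longer row at `δ`, or an addable
`δ` one column to the right of a removable `γ` (then with the row above `δ`), would violate the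
resulting inequality of row lengths.
-/

namespace MultiPartition

variable {l e : ℕ} {v : Fin l → ℤ} {lam : MultiPartition l} {γ δ : ℕ × ℕ × Fin l}

lemma col_le_part (h : Removable lam γ ∨ Addable lam γ) : γ.2.1 ≤ lam.part γ.2.2 γ.1 := by
  rcases h with ⟨h, -⟩ | ⟨h, -⟩ <;> omega

lemma part_le_col_succ (h : Removable lam γ ∨ Addable lam γ) :
    lam.part γ.2.2 γ.1 ≤ γ.2.1 + 1 := by
  rcases h with ⟨h, -⟩ | ⟨h, -⟩ <;> omega

lemma content_eq_or_add_le_of_not_prec (hres : res e v γ = res e v δ) (h : ¬ prec v γ δ) :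
    (γ.2.2 ≤ δ.2.2 ∧ content v δ = content v γ) ∨ content v δ + e ≤ content v γ := by
  have hdvd : (e : ℤ) ∣ content v γ - content v δ :=
    (ZMod.intCast_eq_intCast_iff_dvd_sub _ _ _).1 hres.symm
  simp only [prec, not_or, not_and, not_lt] at h
  obtain ⟨hle, hcomp⟩ := h
  rcases hle.eq_or_lt with heq | hlt
  · exact Or.inl ⟨hcomp heq.symm, heq⟩
  · exact Or.inr (by linarith [Int.le_of_dvd (sub_pos.2 hlt) hdvd])

variable [NeZero l]

lemma memV.sub_le_sub_of_not_prec (hv : memV e v) (hres : res e v γ = res e v δ)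
    (h : ¬ prec v γ δ) : (γ.1 : ℤ) - γ.2.1 ≤ δ.1 - δ.2.1 := by
  have hmono : v 0 ≤ v δ.2.2 := hv.1 (Fin.zero_le _)
  have hbound := hv.2 γ.2.2
  rcases content_eq_or_add_le_of_not_prec hres h with ⟨hc, heq⟩ | hgap
  · have := hv.1 hc
    simp only [content] at heq
    omega
  · simp only [content] at hgap
    omega

lemma IsFLOTW.part_succ_le (hlam : IsFLOTW e v lam) {n : ℕ} (hn : n + 1 < l) {a a' : ℕ}
    (hstep : v ⟨n, by omega⟩ ≤ v ⟨n + 1, hn⟩)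
    (h : v ⟨n + 1, hn⟩ - a' ≤ v ⟨n, by omega⟩ - a) :
    lam.part ⟨n + 1, hn⟩ a' ≤ lam.part ⟨n, by omega⟩ a := by
  have hdiag := hlam.1 ⟨n, by omega⟩ hn a
  dsimp only at hdiag
  exact (lam.antitone _ _ _ (by omega)).trans hdiag

lemma IsFLOTW.part_le_of_le (hv : Monotone v) (hlam : IsFLOTW e v lam) {c c' : Fin l}
    (hc : c ≤ c') {a a' : ℕ} (h : v c' - a' ≤ v c - a) : lam.part c' a' ≤ lam.part c a := by
  obtain ⟨n, hn⟩ := c'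
  have hcn : (c : ℕ) ≤ n := hc
  clear hc
  induction n, hcn using Nat.le_induction generalizing a' with
  | base =>
    simp only [Fin.eta] at h ⊢
    exact lam.antitone c _ _ (by omega)
  | succ n hcn ih =>
    have hn' : n < l := by omega
    have hstep : v ⟨n, hn'⟩ ≤ v ⟨n + 1, hn⟩ := hv (Fin.mk_le_mk.2 (by omega))
    have hstart : v c ≤ v ⟨n, hn'⟩ := hv (Fin.mk_le_mk.2 hcn)
    set a₀ := ((a' : ℤ) - (v ⟨n + 1, hn⟩ - v ⟨n, hn'⟩)).toNat
    calc lam.part ⟨n + 1, hn⟩ a' ≤ lam.part ⟨n, hn'⟩ a₀ :=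
          hlam.part_succ_le hn hstep (by omega)
      _ ≤ lam.part c a := ih hn' (by omega)

lemma IsFLOTW.part_le_of_add_le (hv : memV e v) (hlam : IsFLOTW e v lam) {c c' : Fin l}
    {a a' : ℕ} (h : v c' - a' + e ≤ v c - a) : lam.part c' a' ≤ lam.part c a := by
  set L : Fin l := ⟨l - 1, Nat.sub_lt (Nat.pos_of_ne_zero (NeZero.ne l)) Nat.one_pos⟩
  have hcL : c ≤ L := Fin.mk_le_mk.2 (by omega)
  have hvL : v c ≤ v L := hv.1 hcL
  have hv0 : v 0 ≤ v c' := hv.1 (Fin.zero_le c')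
  have hL0 := hv.2 L
  set a₁ := a + (v L - v c).toNat
  calc lam.part c' a' ≤ lam.part 0 (a₁ + ((e : ℤ) + v 0 - v L).toNat) :=
        hlam.part_le_of_le hv.1 (Fin.zero_le c') (by omega)
    _ ≤ lam.part L a₁ := hlam.2.1 a₁
    _ ≤ lam.part c a := hlam.part_le_of_le hv.1 hcL (by omega)

lemma IsFLOTW.part_le_of_not_prec (hv : memV e v) (hlam : IsFLOTW e v lam)
    (hres : res e v γ = res e v δ) (h : ¬ prec v γ δ) {r : ℕ}
    (hr : (δ.1 : ℤ) - δ.2.1 + γ.2.1 ≤ r) : lam.part δ.2.2 r ≤ lam.part γ.2.2 γ.1 := by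
  rcases content_eq_or_add_le_of_not_prec hres h with ⟨hc, heq⟩ | hgap
  · simp only [content] at heq
    exact hlam.part_le_of_le hv.1 hc (by omega)
  · simp only [content] at hgap
    exact hlam.part_le_of_add_le hv (by omega)

end MultiPartition

open MultiPartition in
theorem flotw_order_by_length_general (e l : ℕ) [NeZero l]
    (v : Fin l → ℤ) (hv : memV e v)
    (lam : MultiPartition l) (hlam : IsFLOTW e v lam) (i : ZMod e)
    (γ δ : ℕ × ℕ × Fin l)
    (hγ : Removable lam γ ∨ Addable lam γ) (hresγ : res e v γ = i)
    (hδ : Removable lam δ ∨ Addable lam δ) (hresδ : res e v δ = i) :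
    (lam.part γ.2.2 γ.1 < lam.part δ.2.2 δ.1 → prec v γ δ)
    ∧ (lam.part γ.2.2 γ.1 = lam.part δ.2.2 δ.1 →
        Removable lam γ → Addable lam δ → prec v γ δ) := by
  have hres : res e v γ = res e v δ := hresγ.trans hresδ.symm
  refine ⟨fun hlt => ?_, fun heq hrem hadd => ?_⟩ <;> by_contra hnot
  · have hγcol := col_le_part hγ
    have hδcol := part_le_col_succ hδ
    have hrow := hlam.part_le_of_not_prec hv hres hnot (r := δ.1) (by omega)
    omega
  · obtain ⟨hγlen, -⟩ := hrem
    obtain ⟨hδlen, hδrow⟩ := hadd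
    have hdiag := hv.sub_le_sub_of_not_prec hres hnot
    have hprev := hlam.part_le_of_not_prec hv hres hnot (r := δ.1 - 1) (by omega)
    omega

open MultiPartition in
/-- reading the addable and removable `i`-nodes of a FLOTW `l`-partition
in increasing `≺_v`-order, the row length `len(γ) = λ^{(c)}_a` is weakly increasing,
and among nodes of equal row length every removable node precedes every addable one. -/
theorem flotw_order_by_length (e l : ℕ) [NeZero l] (he : 2 ≤ e)
    (v : Fin l → ℤ) (hv : memV e v)
    (lam : MultiPartition l) (hlam : IsFLOTW e v lam) (i : ZMod e)
    (γ δ : ℕ × ℕ × Fin l)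
    (hγ : Removable lam γ ∨ Addable lam γ) (hresγ : res e v γ = i)
    (hδ : Removable lam δ ∨ Addable lam δ) (hresδ : res e v δ = i) :
    (lam.part γ.2.2 γ.1 < lam.part δ.2.2 δ.1 → prec v γ δ)
    ∧ (lam.part γ.2.2 γ.1 = lam.part δ.2.2 δ.1 →
        Removable lam γ → Addable lam δ → prec v γ δ) :=
  flotw_order_by_length_general e l v hv lam hlam i γ δ hγ hresγ hδ hresδ
end

section
/- Let v ∈ V_l, μ ∈ Φ(v), i ∈ ℤ/eℤ and r ∈ ℤ_{>0}. Then S_{r,i}(f_v(μ)) equals the number of addable i-nodes (a,b,c) of μ with b − 1 ≥ r minus the number of removable i-nodes (a,b,c) of μ with b ≥ r. -/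
/-- A (ℤ/eℤ-valued) multisegment, recorded by multiplicities: `m len j` is the
multiplicity of the segment `(len; j]` of length `len ≥ 1` and tail `j`. -/
structure Multisegment (e : ℕ) where
  m : ℕ → ZMod e → ℕ
  zero : ∀ j : ZMod e, m 0 j = 0
  finite : ∃ N : ℕ, ∀ len : ℕ, N ≤ len → ∀ j : ZMod e, m len j = 0

namespace Multisegment

variable {e : ℕ}

/-- `S_{l,i}(ψ) = Σ_{k ≥ l} (m_{(k; i-1]}(ψ) − m_{(k; i]}(ψ))`. -/
noncomputable def Sval (ψ : Multisegment e) (i : ZMod e) (len : ℕ) : ℤ :=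
  ∑ᶠ k : ℕ, if len ≤ k then ((ψ.m k (i - 1) : ℤ) - (ψ.m k i : ℤ)) else 0

/-- `min_{l > 0} S_{l,i}(ψ)`. -/
noncomputable def minS (ψ : Multisegment e) (i : ZMod e) : ℤ :=
  sInf {x : ℤ | ∃ len : ℕ, 1 ≤ len ∧ Sval ψ i len = x}

/-- The smallest `l > 0` attaining `min_{l > 0} S_{l,i}(ψ)`. -/
noncomputable def ellF (ψ : Multisegment e) (i : ZMod e) : ℕ :=
  sInf {len : ℕ | 1 ≤ len ∧ Sval ψ i len = minS ψ i}

/-- The largest `l > 0` attaining `min_{l > 0} S_{l,i}(ψ)`. -/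
noncomputable def ellE (ψ : Multisegment e) (i : ZMod e) : ℕ :=
  sSup {len : ℕ | 1 ≤ len ∧ Sval ψ i len = minS ψ i}

/-- The Kashiwara operator `f̃_i` on multisegments: with `ℓ₀ = ellF ψ i`, add `(1; i]`
if `ℓ₀ = 1`, and replace one copy of `(ℓ₀ − 1; i − 1]` by `(ℓ₀; i]` if `ℓ₀ > 1`. -/
noncomputable def ftM (ψ : Multisegment e) (i : ZMod e) : Multisegment e where
  m := fun len j =>
    if len = ellF ψ i ∧ 1 ≤ len ∧ j = i then ψ.m len j + 1
    else if len + 1 = ellF ψ i ∧ 1 ≤ len ∧ j = i - 1 then ψ.m len j - 1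
    else ψ.m len j
  zero := by intro j; simp [ψ.zero j]
  finite := by
    obtain ⟨N, hN⟩ := ψ.finite
    refine ⟨max N (ellF ψ i + 1), fun len hlen j => ?_⟩
    have h1 : N ≤ len := le_trans (le_max_left _ _) hlen
    have h2 : ellF ψ i + 1 ≤ len := le_trans (le_max_right _ _) hlen
    have hne1 : ¬(len = ellF ψ i ∧ 1 ≤ len ∧ j = i) := by rintro ⟨h, -⟩; omega
    have hne2 : ¬(len + 1 = ellF ψ i ∧ 1 ≤ len ∧ j = i - 1) := by rintro ⟨h, -⟩; omega
    simp [hne1, hne2, hN len h1 j]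

/-- The Kashiwara operator `ẽ_i` on multisegments: `none` if `min_{l>0} S_{l,i}(ψ) = 0`;
otherwise, with `ℓ₀ = ellE ψ i`, replace one copy of `(ℓ₀; i]` by `(ℓ₀ − 1; i − 1]`
(removing it when `ℓ₀ = 1`). -/
noncomputable def etM (ψ : Multisegment e) (i : ZMod e) : Option (Multisegment e) :=
  if minS ψ i = 0 then none
  else some
    { m := fun len j =>
        if len = ellE ψ i ∧ 1 ≤ len ∧ j = i then ψ.m len j - 1
        else if len + 1 = ellE ψ i ∧ 1 ≤ len ∧ j = i - 1 then ψ.m len j + 1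
        else ψ.m len j
      zero := by intro j; simp [ψ.zero j]
      finite := by
        obtain ⟨N, hN⟩ := ψ.finite
        refine ⟨max N (ellE ψ i + 1), fun len hlen j => ?_⟩
        have h1 : N ≤ len := le_trans (le_max_left _ _) hlen
        have h2 : ellE ψ i + 1 ≤ len := le_trans (le_max_right _ _) hlen
        have hne1 : ¬(len = ellE ψ i ∧ 1 ≤ len ∧ j = i) := by rintro ⟨h, -⟩; omega
        have hne2 : ¬(len + 1 = ellE ψ i ∧ 1 ≤ len ∧ j = i - 1) := by rintro ⟨h, -⟩; omega
        simp [hne1, hne2, hN len h1 j] }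

/-- Aperiodicity: for every length `l ≥ 1` there is a head `h ∈ ℤ/eℤ` such that the
segment of length `l` and head `h` (i.e. tail `h + l − 1`) does not occur in `ψ`. -/
def Aperiodic (ψ : Multisegment e) : Prop :=
  ∀ len : ℕ, 1 ≤ len → ∃ h : ZMod e, ψ.m len (h + (len : ZMod e) - 1) = 0

end Multisegment

/-- The map `f_v` sending an `l`-partition to the multisegment which contains, for each
nonzero part `λ^{(c)}_j`, one segment of length `λ^{(c)}_j` and tail
`λ^{(c)}_j − j + v_c (mod e)`. -/
noncomputable def fmap (e : ℕ) {l : ℕ} (v : Fin l → ℤ) (lam : MultiPartition l) :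
    Multisegment e where
  m := fun len j =>
    if 1 ≤ len then
      Set.ncard {p : Fin l × ℕ | lam.part p.1 p.2 = len ∧
        (((len : ℤ) - ((p.2 : ℤ) + 1) + v p.1 : ℤ) : ZMod e) = j}
    else 0
  zero := by intro j; simp
  finite := by
    classical
    refine ⟨(Finset.univ.sup fun c : Fin l => lam.part c 0) + 1, fun len hlen j => ?_⟩
    show (if 1 ≤ len then
      Set.ncard {p : Fin l × ℕ | lam.part p.1 p.2 = len ∧
        (((len : ℤ) - ((p.2 : ℤ) + 1) + v p.1 : ℤ) : ZMod e) = j}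
    else 0) = 0
    rw [if_pos (le_trans (Nat.le_add_left 1 _) hlen)]
    convert Set.ncard_empty (Fin l × ℕ)
    ext p
    simp only [Set.mem_setOf_eq, Set.mem_empty_iff_false, iff_false, not_and]
    intro hp
    exfalso
    have h1 : lam.part p.1 p.2 ≤ lam.part p.1 0 := lam.antitone p.1 0 p.2 (Nat.zero_le _)
    have h2 : lam.part p.1 0 ≤ Finset.univ.sup fun c : Fin l => lam.part c 0 :=
      Finset.le_sup (f := fun c : Fin l => lam.part c 0) (Finset.mem_univ p.1)
    omega


/-! `S_{r,i}(f_v(μ))` counts the rows of `μ` of length `≥ r` whose segment has tail `i − 1`,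
minus those whose segment has tail `i`. A row of the first kind either ends just before an
addable `i`-node, or the row above it has the same length, hence tail `i`, and its last node
(an `i`-node) is not removable; rows of the second kind either end in a removable `i`-node, or
the row below has the same length. Shifting by one row matches the two exceptional families,
which cancel, leaving addable minus removable `i`-nodes. -/

section Fiber

variable {α β M : Type*} [AddCommMonoidWithOne M]

theorem Set.support_cast_ncard_fiber_subset (s : Set α) (f : α → β) :
    Function.support (fun b => ({x ∈ s | f x = b}.ncard : M)) ⊆ f '' s := by
  intro b hb
  have hne : {x ∈ s | f x = b}.ncard ≠ 0 := fun h => hb (by simp [h])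
  obtain ⟨x, hxs, hxb⟩ := Set.nonempty_of_ncard_ne_zero hne
  exact ⟨x, hxs, hxb⟩

theorem Set.Finite.cast_ncard_eq_finsum_ncard_fiber {s : Set α} (hs : s.Finite) (f : α → β) :
    (s.ncard : M) = ∑ᶠ b, ({x ∈ s | f x = b}.ncard : M) := by
  classical
  lift s to Finset α using hs
  rw [finsum_eq_sum_of_support_subset _ (s := s.image f)
    (by simpa using Set.support_cast_ncard_fiber_subset (M := M) (s : Set α) f),
    Set.ncard_coe_finset, Finset.card_eq_sum_card_image f s]
  push_cast
  refine Finset.sum_congr rfl fun b _ => ?_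
  rw [← Set.ncard_coe_finset, Finset.coe_filter]
  rfl

theorem Set.Finite.ncard_eq_ncard_and_add_ncard_and_not {P : α → Prop}
    (hP : {x | P x}.Finite) (Q : α → Prop) :
    {x | P x}.ncard = {x | P x ∧ Q x}.ncard + {x | P x ∧ ¬ Q x}.ncard :=
  (Set.ncard_inter_add_ncard_sdiff_eq_ncard _ _ hP).symm

end Fiber

namespace MultiPartition

variable {l : ℕ} (mu : MultiPartition l)

/-- The residue of the last node of row `p = (c, a)`, i.e. the tail of the segment `f_v`
attaches to it. -/
def rowTail (e : ℕ) (v : Fin l → ℤ) (p : Fin l × ℕ) : ZMod e :=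
  (((mu.part p.1 p.2 : ℤ) - ((p.2 : ℤ) + 1) + v p.1 : ℤ) : ZMod e)

def endNode (p : Fin l × ℕ) : ℕ × ℕ × Fin l := (p.2, mu.part p.1 p.2, p.1)

/-- The last node of row `p = (c, a)` (meaningful when the row is nonempty). -/
def lastNode (p : Fin l × ℕ) : ℕ × ℕ × Fin l := (p.2, mu.part p.1 p.2 - 1, p.1)

theorem finite_rows : {p : Fin l × ℕ | 0 < mu.part p.1 p.2}.Finite := by
  obtain ⟨N, hN⟩ := mu.finite
  refine (Set.finite_univ.prod (Set.finite_Iio N)).subset fun p hp => ⟨trivial, ?_⟩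
  by_contra h
  exact hp.ne' (hN p.1 p.2 (not_lt.mp h))

theorem finite_setOf_le_part {r : ℕ} (hr : 1 ≤ r) (P : Fin l × ℕ → Prop) :
    {p : Fin l × ℕ | r ≤ mu.part p.1 p.2 ∧ P p}.Finite :=
  mu.finite_rows.subset fun _ hp => lt_of_lt_of_le hr hp.1

theorem endNode_injective : Function.Injective mu.endNode := by
  rintro ⟨c, a⟩ ⟨c', a'⟩ h
  simp_all [endNode]

theorem lastNode_injective : Function.Injective mu.lastNode := by
  rintro ⟨c, a⟩ ⟨c', a'⟩ h
  simp_all [lastNode]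

theorem Addable.endNode_eq {γ : ℕ × ℕ × Fin l} (h : Addable mu γ) :
    mu.endNode (γ.2.2, γ.1) = γ := by
  simp [endNode, h.1]

theorem Removable.lastNode_eq {γ : ℕ × ℕ × Fin l} (h : Removable mu γ) :
    mu.lastNode (γ.2.2, γ.1) = γ := by
  simp [lastNode, h.1]

theorem res_endNode (e : ℕ) (v : Fin l → ℤ) (p : Fin l × ℕ) :
    res e v (mu.endNode p) = mu.rowTail e v p + 1 := by
  simp only [res, content, endNode, rowTail]
  push_cast
  ring

theorem res_lastNode (e : ℕ) (v : Fin l → ℤ) {p : Fin l × ℕ} (hp : 0 < mu.part p.1 p.2) :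
    res e v (mu.lastNode p) = mu.rowTail e v p := by
  simp only [res, content, lastNode, rowTail]
  push_cast [Nat.one_le_iff_ne_zero.mpr hp.ne']
  ring

theorem rowTail_succ (e : ℕ) (v : Fin l → ℤ) {c : Fin l} {a : ℕ}
    (h : mu.part c (a + 1) = mu.part c a) :
    mu.rowTail e v (c, a + 1) = mu.rowTail e v (c, a) - 1 := by
  simp only [rowTail, h]
  push_cast
  ring

theorem not_addable_endNode_succ_iff {c : Fin l} {a : ℕ} :
    ¬ Addable mu (mu.endNode (c, a + 1)) ↔ mu.part c (a + 1) = mu.part c a := by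
  have := mu.antitone c a (a + 1) a.le_succ
  simp only [Addable, endNode, Nat.add_sub_cancel, true_and, Nat.add_one_ne_zero, false_or]
  omega

theorem not_removable_lastNode_iff {c : Fin l} {a : ℕ} (ha : 0 < mu.part c a) :
    ¬ Removable mu (mu.lastNode (c, a)) ↔ mu.part c (a + 1) = mu.part c a := by
  have := mu.antitone c a (a + 1) a.le_succ
  simp only [Removable, lastNode]
  omega

end MultiPartition

section Counting

open MultiPartition Multisegment

variable {e l : ℕ} (v : Fin l → ℤ) (mu : MultiPartition l)

theorem fmap_m_eq {k : ℕ} (hk : 1 ≤ k) (j : ZMod e) :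
    (fmap e v mu).m k j = {p | mu.part p.1 p.2 = k ∧ mu.rowTail e v p = j}.ncard := by
  simp only [fmap, if_pos hk, rowTail]
  congr 1
  ext p
  exact and_congr_right fun h => by rw [h]

theorem Sval_fmap_eq {r : ℕ} (hr : 1 ≤ r) (i : ZMod e) :
    Sval (fmap e v mu) i r =
      ({p | r ≤ mu.part p.1 p.2 ∧ mu.rowTail e v p = i - 1}.ncard : ℤ)
        - {p | r ≤ mu.part p.1 p.2 ∧ mu.rowTail e v p = i}.ncard := by
  set rows : ZMod e → Set (Fin l × ℕ) :=
    fun j => {p | r ≤ mu.part p.1 p.2 ∧ mu.rowTail e v p = j}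
  have hfin (j : ZMod e) : (rows j).Finite := mu.finite_setOf_le_part hr _
  have hsupp (j : ZMod e) :
      (Function.support fun k => ({p ∈ rows j | mu.part p.1 p.2 = k}.ncard : ℤ)).Finite :=
    ((hfin j).image _).subset (Set.support_cast_ncard_fiber_subset _ _)
  have hfiber (j : ZMod e) (k : ℕ) :
      (if r ≤ k then ((fmap e v mu).m k j : ℤ) else 0) =
        {p ∈ rows j | mu.part p.1 p.2 = k}.ncard := by
    split_ifs with hk
    · rw [fmap_m_eq v mu (hr.trans hk)]
      congr 3
      ext p
      simp only [rows, Set.mem_ofPred_eq]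
      constructor
      · rintro ⟨rfl, ht⟩
        exact ⟨⟨hk, ht⟩, rfl⟩
      · rintro ⟨⟨-, ht⟩, hp⟩
        exact ⟨hp, ht⟩
    · rw [eq_comm, Nat.cast_eq_zero, Set.ncard_eq_zero (hfin j |>.sep _)]
      ext p
      simp only [rows, Set.mem_ofPred_eq, Set.mem_empty_iff_false, iff_false]
      rintro ⟨⟨hp, -⟩, rfl⟩
      exact hk hp
  rw [(hfin _).cast_ncard_eq_finsum_ncard_fiber (fun p => mu.part p.1 p.2),
    (hfin _).cast_ncard_eq_finsum_ncard_fiber (fun p => mu.part p.1 p.2),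
    ← finsum_sub_distrib (hsupp _) (hsupp _)]
  refine finsum_congr fun k => ?_
  rw [← hfiber, ← hfiber]
  split_ifs <;> simp

theorem ncard_addable_eq (i : ZMod e) (r : ℕ) :
    {γ : ℕ × ℕ × Fin l | Addable mu γ ∧ res e v γ = i ∧ r ≤ γ.2.1}.ncard =
      {p | (r ≤ mu.part p.1 p.2 ∧ mu.rowTail e v p = i - 1) ∧
        Addable mu (mu.endNode p)}.ncard := by
  rw [← Set.ncard_preimage_of_injective_subset_range mu.endNode_injective
    fun γ hγ => ⟨_, hγ.1.endNode_eq⟩]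
  congr 1
  ext p
  simp only [Set.mem_preimage, Set.mem_ofPred_eq, res_endNode, eq_sub_iff_add_eq]
  simp only [endNode]
  tauto

theorem ncard_removable_eq (i : ZMod e) {r : ℕ} (hr : 1 ≤ r) :
    {γ : ℕ × ℕ × Fin l | Removable mu γ ∧ res e v γ = i ∧ r ≤ γ.2.1 + 1}.ncard =
      {p | (r ≤ mu.part p.1 p.2 ∧ mu.rowTail e v p = i) ∧
        Removable mu (mu.lastNode p)}.ncard := by
  rw [← Set.ncard_preimage_of_injective_subset_range mu.lastNode_injective
    fun γ hγ => ⟨_, hγ.1.lastNode_eq⟩]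
  congr 1
  ext p
  simp only [Set.mem_preimage, Set.mem_ofPred_eq]
  constructor
  · rintro ⟨hrem, hres, hle⟩
    have hpos : 0 < mu.part p.1 p.2 := by simp only [Removable, lastNode] at hrem; omega
    rw [res_lastNode mu e v hpos] at hres
    exact ⟨⟨by simp only [lastNode] at hle; omega, hres⟩, hrem⟩
  · rintro ⟨⟨hle, hres⟩, hrem⟩
    have hpos : 0 < mu.part p.1 p.2 := by omega
    exact ⟨hrem, by rw [res_lastNode mu e v hpos, hres], by simp only [lastNode]; omega⟩

theorem ncard_not_addable_eq (i : ZMod e) {r : ℕ} (hr : 1 ≤ r) :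
    {p | (r ≤ mu.part p.1 p.2 ∧ mu.rowTail e v p = i - 1) ∧
        ¬ Addable mu (mu.endNode p)}.ncard =
      {p | (r ≤ mu.part p.1 p.2 ∧ mu.rowTail e v p = i) ∧
        ¬ Removable mu (mu.lastNode p)}.ncard := by
  have hshift : Function.Injective fun p : Fin l × ℕ => (p.1, p.2 + 1) := by
    rintro ⟨c, a⟩ ⟨c', a'⟩ h
    simp_all
  rw [← Set.ncard_preimage_of_injective_subset_range hshift]
  · congr 1
    ext ⟨c, a⟩
    simp only [Set.mem_preimage, Set.mem_ofPred_eq, not_addable_endNode_succ_iff]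
    constructor
    · rintro ⟨⟨hle, htail⟩, heq⟩
      rw [rowTail_succ mu e v heq, sub_left_inj] at htail
      exact ⟨⟨heq ▸ hle, htail⟩, (not_removable_lastNode_iff mu (by omega)).mpr heq⟩
    · rintro ⟨⟨hle, htail⟩, hrem⟩
      have heq := (not_removable_lastNode_iff mu (by omega)).mp hrem
      rw [rowTail_succ mu e v heq, htail]
      exact ⟨⟨heq.symm ▸ hle, rfl⟩, heq⟩
  · rintro ⟨c, a⟩ ⟨-, hadd⟩
    obtain _ | a := a
    · exact absurd (by simp [Addable, endNode]) hadd
    · exact ⟨(c, a), rfl⟩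

end Counting

open MultiPartition Multisegment in
theorem Sval_fmap_eq_node_count_general (e l : ℕ)
    (v : Fin l → ℤ)
    (mu : MultiPartition l) (i : ZMod e) (r : ℕ) (hr : 1 ≤ r) :
    Sval (fmap e v mu) i r =
      (Set.ncard {γ : ℕ × ℕ × Fin l |
          Addable mu γ ∧ res e v γ = i ∧ r ≤ γ.2.1} : ℤ)
        - (Set.ncard {γ : ℕ × ℕ × Fin l |
          Removable mu γ ∧ res e v γ = i ∧ r ≤ γ.2.1 + 1} : ℤ) := by
  rw [Sval_fmap_eq v mu hr, ncard_addable_eq, ncard_removable_eq v mu i hr,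
    (mu.finite_setOf_le_part hr _).ncard_eq_ncard_and_add_ncard_and_not
      (fun p => Addable mu (mu.endNode p)),
    (mu.finite_setOf_le_part hr _).ncard_eq_ncard_and_add_ncard_and_not
      (fun p => Removable mu (mu.lastNode p)),
    ncard_not_addable_eq v mu i hr]
  push_cast
  ring

open MultiPartition Multisegment in
/-- Statement 7: for a FLOTW `l`-partition `μ`, `S_{r,i}(f_v(μ))` equals the number of
addable `i`-nodes `(a,b,c)` of `μ` with `b − 1 ≥ r` minus the number of removable
`i`-nodes `(a,b,c)` of `μ` with `b ≥ r` (columns `b` here being 0-based, so the two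
conditions read `r ≤ b` and `r ≤ b + 1` respectively). -/
theorem Sval_fmap_eq_node_count (e l : ℕ) [NeZero l] (he : 2 ≤ e)
    (v : Fin l → ℤ) (hv : memV e v)
    (mu : MultiPartition l) (hmu : IsFLOTW e v mu) (i : ZMod e) (r : ℕ) (hr : 1 ≤ r) :
    Sval (fmap e v mu) i r =
      (Set.ncard {γ : ℕ × ℕ × Fin l |
          Addable mu γ ∧ res e v γ = i ∧ r ≤ γ.2.1} : ℤ)
        - (Set.ncard {γ : ℕ × ℕ × Fin l |
          Removable mu γ ∧ res e v γ = i ∧ r ≤ γ.2.1 + 1} : ℤ) :=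
  Sval_fmap_eq_node_count_general e l v mu i r hr
end

section
/- If ψ is an aperiodic multisegment and i ∈ ℤ/eℤ, then f̃_i ψ is an aperiodic multisegment; moreover, if ẽ_i ψ ≠ 0, then ẽ_i ψ is an aperiodic multisegment. (In particular the Kashiwara operators preserve the set of aperiodic multisegments.) -/
namespace Multisegment

variable {e : ℕ}

lemma sval_eq_sum' (ψ : Multisegment e) (i : ZMod e) (len N : ℕ)
    (hN : ∀ l : ℕ, N ≤ l → ∀ j : ZMod e, ψ.m l j = 0) :
    Sval ψ i len =
      ∑ k ∈ Finset.range N, (if len ≤ k then ((ψ.m k (i - 1) : ℤ) - (ψ.m k i : ℤ)) else 0) := by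
  apply finsum_eq_sum_of_support_subset
  intro k hk
  simp only [Function.mem_support] at hk
  simp only [Finset.coe_range, Set.mem_Iio]
  by_contra h
  push_neg at h
  simp [hN k h] at hk

lemma sval_succ' (ψ : Multisegment e) (i : ZMod e) (l : ℕ) :
    Sval ψ i l = ((ψ.m l (i - 1) : ℤ) - (ψ.m l i : ℤ)) + Sval ψ i (l + 1) := by
  obtain ⟨N, hN⟩ := ψ.finite
  set M := max N (l + 1) with hM
  have hM' : ∀ k : ℕ, M ≤ k → ∀ j : ZMod e, ψ.m k j = 0 :=
    fun k hk j => hN k (le_trans (le_max_left _ _) hk) j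
  rw [sval_eq_sum' ψ i l M hM', sval_eq_sum' ψ i (l + 1) M hM']
  have key : ∀ k ∈ Finset.range M,
      (if l ≤ k then ((ψ.m k (i - 1) : ℤ) - (ψ.m k i : ℤ)) else 0)
        = (if k = l then ((ψ.m k (i - 1) : ℤ) - (ψ.m k i : ℤ)) else 0)
          + (if l + 1 ≤ k then ((ψ.m k (i - 1) : ℤ) - (ψ.m k i : ℤ)) else 0) := by
    intro k _
    split_ifs <;> omega
  rw [Finset.sum_congr rfl key, Finset.sum_add_distrib, Finset.sum_ite_eq' (Finset.range M)]
  have hl : l ∈ Finset.range M := by simp only [Finset.mem_range, hM]; omega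
  simp [hl]

lemma sval_zero_of_ge (ψ : Multisegment e) (i : ZMod e) {N l : ℕ}
    (hN : ∀ k : ℕ, N ≤ k → ∀ j : ZMod e, ψ.m k j = 0) (hl : N ≤ l) :
    Sval ψ i l = 0 := by
  rw [sval_eq_sum' ψ i l N hN]
  apply Finset.sum_eq_zero
  intro k hk
  simp only [Finset.mem_range] at hk
  have : ¬ l ≤ k := by omega
  simp [this]

lemma minS_le (ψ : Multisegment e) (i : ZMod e) {l : ℕ} (hl : 1 ≤ l) :
    minS ψ i ≤ Sval ψ i l := by
  obtain ⟨N, hN⟩ := ψ.finite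
  apply csInf_le
  · -- bounded below
    refine ⟨-(∑ k ∈ Finset.range N, (ψ.m k i : ℤ)), ?_⟩
    rintro x ⟨len, -, rfl⟩
    rw [sval_eq_sum' ψ i len N hN]
    rw [neg_le, ← Finset.sum_neg_distrib]
    apply Finset.sum_le_sum
    intro k _
    split_ifs <;> simp
  · exact ⟨l, hl, rfl⟩

lemma minS_attained (ψ : Multisegment e) (i : ZMod e) :
    ∃ l : ℕ, 1 ≤ l ∧ Sval ψ i l = minS ψ i := by
  obtain ⟨N, hN⟩ := ψ.finite
  have hne : {x : ℤ | ∃ len : ℕ, 1 ≤ len ∧ Sval ψ i len = x}.Nonempty := ⟨Sval ψ i 1, 1, le_refl 1, rfl⟩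
  have hfin : {x : ℤ | ∃ len : ℕ, 1 ≤ len ∧ Sval ψ i len = x}
      ⊆ ↑((Finset.Icc 1 (max N 1)).image (Sval ψ i)) := by
    rintro x ⟨len, hlen, rfl⟩
    simp only [Finset.coe_image, Set.mem_image, Finset.mem_coe, Finset.mem_Icc]
    by_cases h : len ≤ max N 1
    · exact ⟨len, by omega, rfl⟩
    · refine ⟨max N 1, ⟨le_max_right _ _, le_refl _⟩, ?_⟩
      rw [sval_zero_of_ge ψ i hN (le_max_left _ _), sval_zero_of_ge ψ i hN (by omega)]
  have hbdd : BddBelow {x : ℤ | ∃ len : ℕ, 1 ≤ len ∧ Sval ψ i len = x} :=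
    (Set.Finite.subset (Finset.finite_toSet _) hfin).bddBelow
  have := Int.csInf_mem hne hbdd
  obtain ⟨l, hl, hl'⟩ := this
  exact ⟨l, hl, hl'⟩

lemma ellF_spec (ψ : Multisegment e) (i : ZMod e) :
    1 ≤ ellF ψ i ∧ Sval ψ i (ellF ψ i) = minS ψ i := by
  have h := minS_attained ψ i
  have : ellF ψ i ∈ {len : ℕ | 1 ≤ len ∧ Sval ψ i len = minS ψ i} :=
    Nat.sInf_mem (by obtain ⟨l, hl, hl'⟩ := h; exact ⟨l, hl, hl'⟩)
  exact this

lemma ellE_spec (ψ : Multisegment e) (i : ZMod e) (h0 : minS ψ i ≠ 0) :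
    1 ≤ ellE ψ i ∧ Sval ψ i (ellE ψ i) = minS ψ i := by
  obtain ⟨N, hN⟩ := ψ.finite
  have hbdd : BddAbove {len : ℕ | 1 ≤ len ∧ Sval ψ i len = minS ψ i} := by
    refine ⟨N, ?_⟩
    rintro l ⟨hl1, hl2⟩
    by_contra h
    push_neg at h
    rw [sval_zero_of_ge ψ i hN (le_of_lt h)] at hl2
    exact h0 hl2.symm
  have hne : {len : ℕ | 1 ≤ len ∧ Sval ψ i len = minS ψ i}.Nonempty := by
    obtain ⟨l, hl, hl'⟩ := minS_attained ψ i; exact ⟨l, hl, hl'⟩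
  exact Nat.sSup_mem hne hbdd

end Multisegment


open Multisegment in
/-- Statement 14: the Kashiwara operators preserve aperiodicity of multisegments. -/
theorem kashiwara_preserves_aperiodic (e : ℕ) (he : 2 ≤ e)
    (ψ : Multisegment e) (hψ : Aperiodic ψ) (i : ZMod e) :
    Aperiodic (ftM ψ i) ∧ ∀ φ : Multisegment e, etM ψ i = some φ → Aperiodic φ := by
  haveI : Fact (1 < e) := ⟨by omega⟩
  have hii : (i - 1 : ZMod e) ≠ i := by
    intro h
    exact one_ne_zero (sub_eq_self.mp h)
  have tails : ∀ len : ℕ, 1 ≤ len → ∃ j : ZMod e, ψ.m len j = 0 := by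
    intro len hlen
    obtain ⟨h, hh⟩ := hψ len hlen
    exact ⟨h + (len : ZMod e) - 1, hh⟩
  have toAper : ∀ φ : Multisegment e, (∀ len : ℕ, 1 ≤ len → ∃ j : ZMod e, φ.m len j = 0) →
      Aperiodic φ := by
    intro φ hφ len hlen
    obtain ⟨j, hj⟩ := hφ len hlen
    refine ⟨j - (len : ZMod e) + 1, ?_⟩
    have : j - (len : ZMod e) + 1 + (len : ZMod e) - 1 = j := by ring
    rwa [this]
  constructor
  · -- f̃ preserves aperiodicity
    apply toAper
    intro len hlen
    obtain ⟨hF1, hF2⟩ := ellF_spec ψ i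
    by_cases hlF : len = ellF ψ i
    · -- the only increased tail is i; need a zero tail ≠ i
      obtain ⟨j0, hj0⟩ := tails len hlen
      by_cases hji : j0 = i
      · -- ψ.m ℓ₀ i = 0; deduce ψ.m ℓ₀ (i-1) = 0
        rw [hji] at hj0
        have h1 : minS ψ i ≤ Sval ψ i (len + 1) := minS_le ψ i (by omega)
        have h2 : Sval ψ i len = ((ψ.m len (i - 1) : ℤ) - (ψ.m len i : ℤ)) + Sval ψ i (len + 1) :=
          sval_succ' ψ i len
        have hmin : Sval ψ i len = minS ψ i := by rw [hlF]; exact hF2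
        have h3 : (ψ.m len (i - 1) : ℤ) ≤ (ψ.m len i : ℤ) := by omega
        have h4 : ψ.m len (i - 1) = 0 := by
          have := hj0
          omega
        refine ⟨i - 1, ?_⟩
        simp only [ftM]
        have c1 : ¬(len = ellF ψ i ∧ 1 ≤ len ∧ (i - 1 : ZMod e) = i) := by
          rintro ⟨-, -, h⟩; exact hii h
        have c2 : ¬(len + 1 = ellF ψ i ∧ 1 ≤ len ∧ (i - 1 : ZMod e) = i - 1) := by
          rintro ⟨h, -⟩; omega
        simp [c1, c2, h4]
      · refine ⟨j0, ?_⟩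
        simp only [ftM]
        have c1 : ¬(len = ellF ψ i ∧ 1 ≤ len ∧ j0 = i) := by rintro ⟨-, -, h⟩; exact hji h
        have c2 : ¬(len + 1 = ellF ψ i ∧ 1 ≤ len ∧ j0 = i - 1) := by rintro ⟨h, -⟩; omega
        simp [c1, c2, hj0]
    · obtain ⟨j0, hj0⟩ := tails len hlen
      refine ⟨j0, ?_⟩
      simp only [ftM]
      have c1 : ¬(len = ellF ψ i ∧ 1 ≤ len ∧ j0 = i) := by rintro ⟨h, -⟩; exact hlF h
      split_ifs with c1' c2 <;> simp_all
  · -- ẽ preserves aperiodicity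
    intro φ hφ
    by_cases h0 : minS ψ i = 0
    · simp [etM, h0] at hφ
    · simp only [etM, h0, if_false, Option.some.injEq] at hφ
      subst hφ
      apply toAper
      intro len hlen
      obtain ⟨hE1, hE2⟩ := ellE_spec ψ i h0
      by_cases hlE : len + 1 = ellE ψ i
      · -- the only increased tail is i-1; need a zero tail ≠ i-1
        obtain ⟨j0, hj0⟩ := tails len hlen
        by_cases hji : j0 = i - 1
        · rw [hji] at hj0
          have h1 : minS ψ i ≤ Sval ψ i len := minS_le ψ i hlen
          have h2 : Sval ψ i len = ((ψ.m len (i - 1) : ℤ) - (ψ.m len i : ℤ)) + Sval ψ i (len + 1) :=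
            sval_succ' ψ i len
          have hmin : Sval ψ i (len + 1) = minS ψ i := by rw [hlE]; exact hE2
          have h4 : ψ.m len i = 0 := by
            have := hj0
            omega
          refine ⟨i, ?_⟩
          dsimp only
          have c1 : ¬(len = ellE ψ i ∧ 1 ≤ len ∧ (i : ZMod e) = i) := by
            rintro ⟨h, -⟩; omega
          have c2 : ¬(len + 1 = ellE ψ i ∧ 1 ≤ len ∧ (i : ZMod e) = i - 1) := by
            rintro ⟨-, -, h⟩; exact hii h.symm
          simp [c1, c2, h4]
        · refine ⟨j0, ?_⟩
          dsimp only
          have c1 : ¬(len = ellE ψ i ∧ 1 ≤ len ∧ j0 = i) := by rintro ⟨h, -⟩; omega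
          have c2 : ¬(len + 1 = ellE ψ i ∧ 1 ≤ len ∧ j0 = i - 1) := by
            rintro ⟨-, -, h⟩; exact hji h
          simp [c1, c2, hj0]
      · obtain ⟨j0, hj0⟩ := tails len hlen
        refine ⟨j0, ?_⟩
        dsimp only
        have c2 : ¬(len + 1 = ellE ψ i ∧ 1 ≤ len ∧ j0 = i - 1) := by rintro ⟨h, -⟩; exact hlE h
        split_ifs with c1' c2' <;> simp_all
end
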